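/- The optimal value of the following semidefinite program equals 3/4: maximize (1/2)⟨φ₀|σ₀|φ₀⟩ + (1/2)⟨φ₁|σ₁|φ₁⟩ over density matrices σ₀, σ₁ on ℂ³ ⊗ ℂ³ subject to the single constraint Tr_A(σ₀) = Tr_A(σ₁) (equal partial traces over the first qutrit factor). Moreover, the optimum is attained by feasible σ₀, σ₁ whose common marginal Tr_A(σ_y) equals the diagonal matrix diag(1/6, 1/6, 2/3). (This is the optimal cheating probability of Alice in the qutrit bit-commitment protocol.) -/

import Mathlib

/-!
STATEMENT 0: The optimal value of Alice's cheating SDP in the qutrit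
bit-commitment protocol equals 3/4, attained with common marginal
diag(1/6, 1/6, 2/3).
-/

open Matrix
open scoped Matrix BigOperators ComplexOrder

noncomputable section

/-- Square matrices over ℂ indexed by `α`. -/
abbrev Mat (α : Type) : Type := Matrix α α ℂ

/-- A density matrix: positive semidefinite with unit trace. -/
def IsDensity {α : Type} [Fintype α] [DecidableEq α] (ρ : Mat α) : Prop :=
  ρ.PosSemidef ∧ ρ.trace = 1

/-- Hilbert–Schmidt inner product ⟨P, Q⟩ = Tr(P† Q). -/
def hs {α : Type} [Fintype α] (P Q : Mat α) : ℂ := (Pᴴ * Q).trace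

/-- Outer product |v⟩⟨v|. -/
def outer {α : Type} (v : α → ℂ) : Mat α := fun i j => v i * star (v j)

/-- Standard basis vector |i⟩. -/
def ket {α : Type} [DecidableEq α] (i : α) : α → ℂ := fun j => if j = i then 1 else 0

/-- The embedding of Fin 2 into Fin 3. -/
def f23 (y : Fin 2) : Fin 3 := ⟨y.val, by omega⟩

/-- |φ_y⟩ = (|yy⟩ + |22⟩)/√2 ∈ ℂ³ ⊗ ℂ³. -/
def phi (y : Fin 2) : Fin 3 × Fin 3 → ℂ :=
  fun p => (ket (f23 y, f23 y) p + ket ((2 : Fin 3), (2 : Fin 3)) p) / (Real.sqrt 2 : ℂ)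

/-- Partial trace over the first tensor factor. -/
def ptrA {α β : Type} [Fintype α] (ρ : Mat (α × β)) : Mat β :=
  fun b b' => ∑ a, ρ (a, b) (a, b')

/-!
Weak duality: if `t₀ • 1 + 1 ⊗ₖ W - P₀` and `t₁ • 1 - 1 ⊗ₖ W - P₁` are positive semidefinite,
pairing them with `σ₀`, `σ₁` gives `⟨P₀, σ₀⟩ + ⟨P₁, σ₁⟩ ≤ t₀ + t₁`, since `1 ⊗ₖ W` pairs with `σ`
through the marginal `Tr_A σ` and the two marginals agree. For `P_y = ½ |φ_y⟩⟨φ_y|` the point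
`t₀ = t₁ = 3/8`, `W = (3/8)(|0⟩⟨0| - |1⟩⟨1|)` is dual feasible, both slacks being nonnegative
combinations of rank-one projectors, so the value is at most `3/4`. It is attained by
`σ₀ = σ₁ = |ψ⟩⟨ψ|` with `ψ = (|00⟩ + |11⟩ + 2|22⟩)/√6`: `|⟨φ_y|ψ⟩|² = 3/4` and
`Tr_A |ψ⟩⟨ψ| = diag(1/6, 1/6, 2/3)`.
-/

open scoped Kronecker

section General

variable {α β : Type}

lemma outer_eq_vecMulVec (v : α → ℂ) : outer v = vecMulVec v (star v) := rfl

lemma ket_eq_single [DecidableEq α] (i : α) : ket i = Pi.single i 1 := by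
  ext j
  simp only [ket, Pi.single_apply]

lemma outer_smul (c : ℂ) (v : α → ℂ) : outer (c • v) = (c * star c) • outer v := by
  ext i j
  simp only [outer, Pi.smul_apply, Matrix.smul_apply, smul_eq_mul, star_mul']
  ring

variable [Fintype α]

lemma outer_posSemidef (v : α → ℂ) : (outer v).PosSemidef :=
  posSemidef_vecMulVec_self_star v

lemma hs_add_left (P Q σ : Mat α) : hs (P + Q) σ = hs P σ + hs Q σ := by
  simp only [hs, conjTranspose_add, add_mul, trace_add]

lemma hs_sub_left (P Q σ : Mat α) : hs (P - Q) σ = hs P σ - hs Q σ := by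
  simp only [hs, conjTranspose_sub, sub_mul, trace_sub]

lemma hs_smul_left (c : ℂ) (P σ : Mat α) : hs (c • P) σ = star c * hs P σ := by
  simp only [hs, conjTranspose_smul, smul_mul, trace_smul, smul_eq_mul]

lemma hs_smul_right (c : ℂ) (P σ : Mat α) : hs P (c • σ) = c * hs P σ := by
  simp only [hs, Matrix.mul_smul, trace_smul, smul_eq_mul]

lemma hs_sum_left {ι : Type} (s : Finset ι) (P : ι → Mat α) (σ : Mat α) :
    hs (∑ i ∈ s, P i) σ = ∑ i ∈ s, hs (P i) σ := by
  simp only [hs, conjTranspose_sum, Finset.sum_mul, trace_sum]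

lemma hs_one_left [DecidableEq α] (σ : Mat α) : hs 1 σ = σ.trace := by
  simp only [hs, conjTranspose_one, one_mul]

lemma hs_outer (v : α → ℂ) (σ : Mat α) : hs (outer v) σ = star v ⬝ᵥ (σ *ᵥ v) := by
  rw [hs, outer_eq_vecMulVec, conjTranspose_vecMulVec, star_star, vecMulVec_mul, trace_vecMulVec,
    dotProduct_comm, dotProduct_mulVec]

lemma hs_outer_outer (v w : α → ℂ) :
    hs (outer v) (outer w) = (star v ⬝ᵥ w) * (star w ⬝ᵥ v) := by
  rw [hs_outer, outer_eq_vecMulVec, dotProduct_mulVec, vecMul_vecMulVec, smul_dotProduct,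
    smul_eq_mul]

lemma trace_outer (v : α → ℂ) : (outer v).trace = star v ⬝ᵥ v := by
  rw [outer_eq_vecMulVec, trace_vecMulVec, dotProduct_comm]

lemma hs_nonneg [DecidableEq α] {Q σ : Mat α} (hQ : Q.PosSemidef) (hσ : σ.PosSemidef) :
    0 ≤ hs Q σ := by
  obtain ⟨m, v, rfl⟩ := posSemidef_iff_eq_sum_vecMulVec.mp hQ
  simp only [← outer_eq_vecMulVec, hs_sum_left, hs_outer]
  exact Finset.sum_nonneg fun i _ => hσ.dotProduct_mulVec_nonneg (v i)

lemma hs_one_kronecker [Fintype β] [DecidableEq α] (W : Mat β) (σ : Mat (α × β)) :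
    hs (1 ⊗ₖ W) σ = hs W (ptrA σ) := by
  simp only [hs, conjTranspose_kronecker, conjTranspose_one, trace, diag_apply, mul_apply,
    kronecker_apply, one_apply, ptrA, Fintype.sum_prod_type, ite_mul, one_mul, zero_mul,
    Finset.mul_sum]
  rw [Finset.sum_comm]
  refine Finset.sum_congr rfl fun b _ => ?_
  conv_rhs => rw [Finset.sum_comm]
  refine Finset.sum_congr rfl fun a _ => ?_
  simp only [Finset.sum_ite_irrel, Finset.sum_const_zero, Finset.sum_ite_eq, Finset.mem_univ,
    if_true]

theorem re_hs_add_hs_le_of_dual_feasible [Fintype β] [DecidableEq α] [DecidableEq β]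
    {P₀ P₁ σ₀ σ₁ : Mat (α × β)} {t₀ t₁ : ℝ} (W : Mat β)
    (hQ₀ : ((t₀ : ℂ) • 1 + 1 ⊗ₖ W - P₀).PosSemidef)
    (hQ₁ : ((t₁ : ℂ) • 1 - 1 ⊗ₖ W - P₁).PosSemidef)
    (hσ₀ : IsDensity σ₀) (hσ₁ : IsDensity σ₁) (hσ : ptrA σ₀ = ptrA σ₁) :
    (hs P₀ σ₀ + hs P₁ σ₁).re ≤ t₀ + t₁ := by
  have h := add_nonneg (hs_nonneg hQ₀ hσ₀.1) (hs_nonneg hQ₁ hσ₁.1)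
  simp only [hs_sub_left, hs_add_left, hs_smul_left, hs_one_left, hs_one_kronecker, hσ, hσ₀.2,
    hσ₁.2, Complex.star_def, Complex.conj_ofReal] at h
  have h' : hs P₀ σ₀ + hs P₁ σ₁ ≤ ((t₀ + t₁ : ℝ) : ℂ) := by
    push_cast
    exact sub_nonneg.mp (by convert h using 1; ring)
  simpa using (Complex.le_def.mp h').1

end General

lemma outer_phi (y : Fin 2) :
    outer (phi y) = (1/2 : ℂ) • outer (ket (f23 y, f23 y) + ket ((2 : Fin 3), (2 : Fin 3))) := by
  have hphi :
      phi y = (Real.sqrt 2 : ℂ)⁻¹ • (ket (f23 y, f23 y) + ket ((2 : Fin 3), (2 : Fin 3))) := by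
    ext p
    simp only [phi, Pi.smul_apply, Pi.add_apply, smul_eq_mul, div_eq_inv_mul]
  have h2 : (Real.sqrt 2 : ℂ)⁻¹ * star (Real.sqrt 2 : ℂ)⁻¹ = 1/2 := by
    rw [star_inv₀, Complex.star_def, Complex.conj_ofReal, ← mul_inv, ← Complex.ofReal_mul,
      Real.mul_self_sqrt zero_le_two]
    norm_num
  rw [hphi, outer_smul, h2]

def dualW : Mat (Fin 3) := (3/8 : ℂ) • diagonal ![1, -1, 0]

lemma posSemidef_dualSlack₀ :
    (((3/8 : ℝ) : ℂ) • 1 + 1 ⊗ₖ dualW - (1/2 : ℂ) • outer (phi 0)).PosSemidef := by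
  have h : ((3/8 : ℝ) : ℂ) • 1 + 1 ⊗ₖ dualW - (1/2 : ℂ) • outer (phi 0) =
      (1/8 : ℂ) • outer ((2 : ℂ) • ket ((0 : Fin 3), (0 : Fin 3)) - ket (2, 2))
        + (3/4 : ℂ) • (outer (ket (1, 0)) + outer (ket (2, 0)))
        + (3/8 : ℂ) • (outer (ket (0, 2)) + outer (ket (1, 2))) := by
    rw [outer_phi]
    ext ⟨a, b⟩ ⟨c, d⟩
    fin_cases a <;> fin_cases b <;> fin_cases c <;> fin_cases d <;>
      simp [outer, ket, dualW, f23, one_apply] <;> norm_num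
  rw [h]
  exact (((outer_posSemidef _).smul (by positivity)).add
    (((outer_posSemidef _).add (outer_posSemidef _)).smul (by positivity))).add
    (((outer_posSemidef _).add (outer_posSemidef _)).smul (by positivity))

lemma posSemidef_dualSlack₁ :
    (((3/8 : ℝ) : ℂ) • 1 - 1 ⊗ₖ dualW - (1/2 : ℂ) • outer (phi 1)).PosSemidef := by
  have h : ((3/8 : ℝ) : ℂ) • 1 - 1 ⊗ₖ dualW - (1/2 : ℂ) • outer (phi 1) =
      (1/8 : ℂ) • outer ((2 : ℂ) • ket ((1 : Fin 3), (1 : Fin 3)) - ket (2, 2))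
        + (3/4 : ℂ) • (outer (ket (0, 1)) + outer (ket (2, 1)))
        + (3/8 : ℂ) • (outer (ket (0, 2)) + outer (ket (1, 2))) := by
    rw [outer_phi]
    ext ⟨a, b⟩ ⟨c, d⟩
    fin_cases a <;> fin_cases b <;> fin_cases c <;> fin_cases d <;>
      simp [outer, ket, dualW, f23, one_apply] <;> norm_num
  rw [h]
  exact (((outer_posSemidef _).smul (by positivity)).add
    (((outer_posSemidef _).add (outer_posSemidef _)).smul (by positivity))).add
    (((outer_posSemidef _).add (outer_posSemidef _)).smul (by positivity))

def optimalState : Mat (Fin 3 × Fin 3) :=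
  (1/6 : ℂ) • outer (ket ((0 : Fin 3), (0 : Fin 3)) + ket (1, 1) + (2 : ℂ) • ket (2, 2))

lemma isDensity_optimalState : IsDensity optimalState := by
  refine ⟨(outer_posSemidef _).smul (by positivity), ?_⟩
  rw [optimalState, trace_smul, trace_outer]
  simp [ket_eq_single]
  norm_num

lemma ptrA_optimalState : ptrA optimalState = diagonal ![1/6, 1/6, 2/3] := by
  ext b b'
  fin_cases b <;> fin_cases b' <;> simp [optimalState, ptrA, outer, ket, map_ofNat]
  norm_num

lemma hs_outer_phi_optimalState (y : Fin 2) : hs (outer (phi y)) optimalState = 3/4 := by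
  rw [optimalState, outer_phi, hs_smul_left, hs_smul_right, hs_outer_outer]
  fin_cases y <;> simp [ket_eq_single, f23] <;> norm_num

theorem bit_commitment_cheating_Alice :
    IsGreatest
      {x : ℝ | ∃ σ0 σ1 : Mat (Fin 3 × Fin 3),
        IsDensity σ0 ∧ IsDensity σ1 ∧ ptrA σ0 = ptrA σ1 ∧
        x = ((1/2 : ℂ) * hs (outer (phi 0)) σ0
            + (1/2 : ℂ) * hs (outer (phi 1)) σ1).re}
      (3/4)
    ∧ ∃ σ0 σ1 : Mat (Fin 3 × Fin 3),
        IsDensity σ0 ∧ IsDensity σ1 ∧ ptrA σ0 = ptrA σ1 ∧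
        ptrA σ0 = Matrix.diagonal ![(1/6 : ℂ), 1/6, 2/3] ∧
        ((1/2 : ℂ) * hs (outer (phi 0)) σ0
          + (1/2 : ℂ) * hs (outer (phi 1)) σ1).re = 3/4 := by
  have hval : ((1/2 : ℂ) * hs (outer (phi 0)) optimalState
      + (1/2 : ℂ) * hs (outer (phi 1)) optimalState).re = 3/4 := by
    rw [hs_outer_phi_optimalState, hs_outer_phi_optimalState]
    norm_num
  have hopt := isDensity_optimalState
  refine ⟨⟨⟨_, _, hopt, hopt, rfl, hval.symm⟩, ?_⟩, _, _, hopt, hopt, rfl, ptrA_optimalState, hval⟩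
  rintro x ⟨σ₀, σ₁, hσ₀, hσ₁, hσ, rfl⟩
  have h := re_hs_add_hs_le_of_dual_feasible dualW posSemidef_dualSlack₀ posSemidef_dualSlack₁
    hσ₀ hσ₁ hσ
  rw [hs_smul_left, hs_smul_left] at h
  convert h using 3 <;> norm_num

end
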